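/- Medium stability is universal: for every finite nonempty player set N and every value function v on nonempty subsets of N, there exists a partition P of N and an allocation x : N → ℝ with x(i) ≥ v({i}) for all i and Σ_{i∈C} x(i) = v(C) for each C ∈ P, such that Σ_{C∈P} v(C) ≥ Σ_{C'∈P'} v(C') for every other partition P' of N comparable to P in the refinement order (in fact, for all partitions P'). -/

import Mathlib

/-! There are finitely many partitions of `N`, so one of maximal worth exists. In it every block
`C` satisfies `∑ i ∈ C, v {i} ≤ v C`, since otherwise splitting `C` into singletons would
increase the worth. Hence giving each player its stand-alone value plus an equal share of the
surplus of its block is individually rational and exactly exhausts the value of every block. -/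

open Finset

variable {α : Type*} [DecidableEq α]

/-- `P` is a partition of the finite set `N`: every block is nonempty, contained in `N`,
and every player of `N` lies in exactly one block. -/
def IsPartition (N : Finset α) (P : Finset (Finset α)) : Prop :=
  (∀ C ∈ P, C.Nonempty) ∧ (∀ C ∈ P, C ⊆ N) ∧ (∀ i ∈ N, ∃! C, C ∈ P ∧ i ∈ C)

/-- `P'` refines `P`: every block of `P'` is contained in a block of `P`. -/
def Refines (P' P : Finset (Finset α)) : Prop :=
  ∀ C' ∈ P', ∃ C ∈ P, C' ⊆ C

/-- Strict refinement. -/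
def StrictlyRefines (P' P : Finset (Finset α)) : Prop :=
  Refines P' P ∧ P' ≠ P

/-- The worth of a partition: the sum of the values of its blocks. -/
def worth (v : Finset α → ℝ) (P : Finset (Finset α)) : ℝ :=
  ∑ C ∈ P, v C

section Partition

variable {N C D : Finset α} {P Q : Finset (Finset α)} {i : α}

omit [DecidableEq α] in
theorem IsPartition.eq_of_mem (hP : IsPartition N P) (hC : C ∈ P) (hD : D ∈ P)
    (hiC : i ∈ C) (hiD : i ∈ D) : C = D :=
  (hP.2.2 i (hP.2.1 C hC hiC)).unique ⟨hC, hiC⟩ ⟨hD, hiD⟩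

theorem isPartition_image_singleton (N : Finset α) :
    IsPartition N (N.image fun i => ({i} : Finset α)) := by
  refine ⟨?_, ?_, fun i hi => ⟨{i}, ⟨mem_image_of_mem _ hi, mem_singleton_self i⟩, ?_⟩⟩
  · intro C hC
    obtain ⟨i, -, rfl⟩ := mem_image.mp hC
    exact singleton_nonempty i
  · intro C hC
    obtain ⟨i, hi, rfl⟩ := mem_image.mp hC
    exact singleton_subset_iff.mpr hi
  · rintro C ⟨hC, hiC⟩
    obtain ⟨j, -, rfl⟩ := mem_image.mp hC
    rw [mem_singleton.mp hiC]

theorem IsPartition.disjoint_erase (hP : IsPartition N P) (hC : C ∈ P) (hQ : IsPartition C Q) :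
    Disjoint (P.erase C) Q := by
  refine disjoint_left.mpr fun D hDP hDQ => ?_
  obtain ⟨i, hi⟩ := hQ.1 D hDQ
  exact ne_of_mem_erase hDP (hP.eq_of_mem (mem_of_mem_erase hDP) hC hi (hQ.2.1 D hDQ hi))

theorem IsPartition.erase_union (hP : IsPartition N P) (hC : C ∈ P) (hQ : IsPartition C Q) :
    IsPartition N (P.erase C ∪ Q) := by
  refine ⟨fun D hD => ?_, fun D hD => ?_, fun i hi => ?_⟩
  · rcases mem_union.mp hD with hD | hD
    exacts [hP.1 D (mem_of_mem_erase hD), hQ.1 D hD]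
  · rcases mem_union.mp hD with hD | hD
    exacts [hP.2.1 D (mem_of_mem_erase hD), (hQ.2.1 D hD).trans (hP.2.1 C hC)]
  obtain ⟨D, ⟨hDP, hiD⟩, -⟩ := hP.2.2 i hi
  by_cases hiC : i ∈ C
  · obtain ⟨E, ⟨hEQ, hiE⟩, hE⟩ := hQ.2.2 i hiC
    refine ⟨E, ⟨mem_union_right _ hEQ, hiE⟩, fun F ⟨hF, hiF⟩ => ?_⟩
    rcases mem_union.mp hF with hF | hF
    · exact absurd (hP.eq_of_mem (mem_of_mem_erase hF) hC hiF hiC) (ne_of_mem_erase hF)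
    · exact hE F ⟨hF, hiF⟩
  · have hDC : D ≠ C := by rintro rfl; exact hiC hiD
    refine ⟨D, ⟨mem_union_left _ (mem_erase.mpr ⟨hDC, hDP⟩), hiD⟩, fun F ⟨hF, hiF⟩ => ?_⟩
    rcases mem_union.mp hF with hF | hF
    · exact hP.eq_of_mem (mem_of_mem_erase hF) hDP hiF hiD
    · exact absurd (hQ.2.1 F hF hiF) hiC

theorem IsPartition.worth_erase_union (v : Finset α → ℝ) (hP : IsPartition N P) (hC : C ∈ P)
    (hQ : IsPartition C Q) : worth v (P.erase C ∪ Q) + v C = worth v P + worth v Q := by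
  rw [worth, worth, worth, sum_union (hP.disjoint_erase hC hQ), ← sum_erase_add _ _ hC]
  ring

theorem worth_image_singleton (v : Finset α → ℝ) (C : Finset α) :
    worth v (C.image fun i => ({i} : Finset α)) = ∑ i ∈ C, v {i} :=
  sum_image fun _ _ _ _ h => singleton_injective h

theorem exists_isPartition_forall_worth_le (N : Finset α) (v : Finset α → ℝ) :
    ∃ P, IsPartition N P ∧ ∀ P', IsPartition N P' → worth v P' ≤ worth v P := by
  have hfin : {P | IsPartition N P}.Finite :=
    (N.powerset.powerset : Set (Finset (Finset α))).toFinite.subset fun P hP =>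
      mem_powerset.mpr fun C hC => mem_powerset.mpr (hP.2.1 C hC)
  exact Set.exists_max_image _ (worth v) hfin ⟨_, isPartition_image_singleton N⟩

theorem IsPartition.sum_singleton_le_of_forall_worth_le {v : Finset α → ℝ}
    (hP : IsPartition N P) (hmax : ∀ P', IsPartition N P' → worth v P' ≤ worth v P)
    (hC : C ∈ P) : ∑ i ∈ C, v {i} ≤ v C := by
  have hsplit := hP.worth_erase_union v hC (isPartition_image_singleton C)
  have := hmax _ (hP.erase_union hC (isPartition_image_singleton C))
  rw [worth_image_singleton] at hsplit
  linarith

end Partition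

noncomputable def equalSurplusShare (v : Finset α → ℝ) (P : Finset (Finset α)) (i : α) : ℝ :=
  v {i} + ∑ C ∈ P with i ∈ C, (v C - ∑ j ∈ C, v {j}) / #C

theorem le_equalSurplusShare {v : Finset α → ℝ} {P : Finset (Finset α)}
    (h : ∀ C ∈ P, ∑ j ∈ C, v {j} ≤ v C) (i : α) : v {i} ≤ equalSurplusShare v P i := by
  refine le_add_of_nonneg_right (sum_nonneg fun C hC => div_nonneg ?_ (Nat.cast_nonneg _))
  exact sub_nonneg.mpr (h C (mem_filter.mp hC).1)

theorem IsPartition.sum_equalSurplusShare {N C : Finset α} {P : Finset (Finset α)}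
    (v : Finset α → ℝ) (hP : IsPartition N P) (hC : C ∈ P) :
    ∑ i ∈ C, equalSurplusShare v P i = v C := by
  have hblock : ∀ i ∈ C, {D ∈ P | i ∈ D} = {C} := fun i hi =>
    eq_singleton_iff_unique_mem.mpr
      ⟨mem_filter.mpr ⟨hC, hi⟩, fun D hD =>
        hP.eq_of_mem (mem_filter.mp hD).1 hC (mem_filter.mp hD).2 hi⟩
  have hcard : (#C : ℝ) ≠ 0 := Nat.cast_ne_zero.mpr (hP.1 C hC).card_ne_zero
  rw [sum_congr rfl fun i hi => by rw [equalSurplusShare, hblock i hi, sum_singleton],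
    sum_add_distrib, sum_const, nsmul_eq_mul, mul_div_cancel₀ _ hcard]
  ring

theorem medium_stability_universal_general (N : Finset α) (v : Finset α → ℝ) :
    ∃ (P : Finset (Finset α)) (x : α → ℝ), IsPartition N P ∧
      (∀ i ∈ N, v {i} ≤ x i) ∧
      (∀ C ∈ P, ∑ i ∈ C, x i = v C) ∧
      (∀ P' : Finset (Finset α), IsPartition N P' → worth v P' ≤ worth v P) := by
  obtain ⟨P, hP, hmax⟩ := exists_isPartition_forall_worth_le N v
  refine ⟨P, equalSurplusShare v P, hP, fun i _ => ?_, fun C hC => hP.sum_equalSurplusShare v hC,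
    hmax⟩
  exact le_equalSurplusShare (fun C hC => hP.sum_singleton_le_of_forall_worth_le hmax hC) i

/-- universality of medium stability: every game has a partition together
with a feasible allocation whose worth dominates that of all partitions. -/
theorem medium_stability_universal (N : Finset α) (v : Finset α → ℝ) (hN : N.Nonempty) :
    ∃ (P : Finset (Finset α)) (x : α → ℝ), IsPartition N P ∧
      (∀ i ∈ N, v {i} ≤ x i) ∧
      (∀ C ∈ P, ∑ i ∈ C, x i = v C) ∧
      (∀ P' : Finset (Finset α), IsPartition N P' → worth v P' ≤ worth v P) :=
  medium_stability_universal_general N v
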